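/- Under the setting of the previous statement, if additionally (1/λ) q Ψ − fᵀ ∇Ψ − ½ Tr((∇²Ψ) Σ) ≤ 0 at a point x with q(x) ≥ 0, then L(V)(x) ≤ −q(x) − (λ/(2Ψ(x)²)) (∇Ψ(x))ᵀ Σ(x) ∇Ψ(x) ≤ 0, where Σ(x) is positive semidefinite. -/

import Mathlib

/-!
With `V = -λ log Ψ` one has `∇V = -(λ/Ψ) ∇Ψ` and `∇²V = -(λ/Ψ) ∇²Ψ + (λ/Ψ²) ∇Ψ ∇Ψᵀ`, while the
feedback `u = -R⁻¹ Gᵀ ∇V` gives `G u = -λ⁻¹ Σ ∇V`. Substituting,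
`L(V) = -(λ/Ψ) (fᵀ∇Ψ + ½ Tr(∇²Ψ Σ)) - (λ/(2Ψ²)) ∇Ψᵀ Σ ∇Ψ`: the relaxed HJB inequality bounds the
first term by `-q`, and `Σ ⪰ 0` makes the second one nonpositive.
-/

open Real Matrix

noncomputable def grad (n : ℕ) (V : (Fin n → ℝ) → ℝ) (x : Fin n → ℝ) : Fin n → ℝ :=
  fun i => fderiv ℝ V x (Pi.single i 1)

noncomputable def hess (n : ℕ) (V : (Fin n → ℝ) → ℝ) (x : Fin n → ℝ) :
    Matrix (Fin n) (Fin n) ℝ :=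
  Matrix.of fun i j => fderiv ℝ (fun y => fderiv ℝ V y (Pi.single j 1)) x (Pi.single i 1)

section LogTransform

variable {n : ℕ} {Ψ : (Fin n → ℝ) → ℝ} {x : Fin n → ℝ}

theorem fderiv_const_mul_log (c : ℝ) (hΨ : DifferentiableAt ℝ Ψ x) (hx : Ψ x ≠ 0) :
    fderiv ℝ (fun y => c * log (Ψ y)) x = (c / Ψ x) • fderiv ℝ Ψ x := by
  rw [((hΨ.hasFDerivAt.log hx).const_mul c).fderiv, smul_smul, div_eq_mul_inv]

theorem grad_const_mul_log (c : ℝ) (hΨ : DifferentiableAt ℝ Ψ x) (hx : Ψ x ≠ 0) :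
    grad n (fun y => c * log (Ψ y)) x = (c / Ψ x) • grad n Ψ x := by
  ext i
  simp [grad, fderiv_const_mul_log c hΨ hx]

theorem hess_const_mul_log (c : ℝ) (hΨ : ContDiffAt ℝ 2 Ψ x) (hx : Ψ x ≠ 0) :
    hess n (fun y => c * log (Ψ y)) x =
      (c / Ψ x) • hess n Ψ x - (c / Ψ x ^ 2) • vecMulVec (grad n Ψ x) (grad n Ψ x) := by
  have hΨ' : DifferentiableAt ℝ (fderiv ℝ Ψ) x :=
    (hΨ.fderiv_right (m := 1) (by norm_num)).differentiableAt (by norm_num)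
  have hnear : ∀ᶠ y in nhds x, DifferentiableAt ℝ Ψ y ∧ Ψ y ≠ 0 :=
    ((hΨ.eventually (by simp)).and (hΨ.continuousAt.eventually_ne hx)).mono
      fun y hy => ⟨hy.1.differentiableAt (by norm_num), hy.2⟩
  ext i j
  have hpartial : (fun y => fderiv ℝ (fun z => c * log (Ψ z)) y (Pi.single j 1)) =ᶠ[nhds x]
      fun y => c * ((Ψ y)⁻¹ * fderiv ℝ Ψ y (Pi.single j 1)) :=
    hnear.mono fun y hy => by simp [fderiv_const_mul_log c hy.1 hy.2, div_eq_mul_inv, mul_assoc]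
  have hderiv : HasFDerivAt (fun y => c * ((Ψ y)⁻¹ * fderiv ℝ Ψ y (Pi.single j 1))) _ x :=
    (((hasDerivAt_inv hx).comp_hasFDerivAt x (hΨ.differentiableAt (by norm_num)).hasFDerivAt).mul
      (hΨ'.clm_apply (differentiableAt_const (Pi.single j 1))).hasFDerivAt).const_mul c
  rw [hess, of_apply, hpartial.fderiv_eq, hderiv.fderiv]
  simp only [Function.comp_apply, neg_smul, smul_neg, smul_add, _root_.add_apply,
    _root_.smul_apply, smul_eq_mul, _root_.neg_apply, hess, smul_of, Matrix.sub_apply, of_apply,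
    Pi.smul_apply, Matrix.smul_apply, vecMulVec_apply, grad]
  field_simp
  ring

end LogTransform

theorem trace_vecMulVec_mul {ι R : Type*} [Fintype ι] [CommSemiring R] (v w : ι → R)
    (S : Matrix ι ι R) : (vecMulVec v w * S).trace = w ⬝ᵥ S *ᵥ v := by
  rw [vecMulVec_mul, trace_vecMulVec, dotProduct_comm, ← dotProduct_mulVec]

theorem mulVec_mul_transpose_mulVec_of_smul_eq {ι κ K : Type*} [Fintype ι] [Fintype κ] [Field K]
    {lam : K} (hlam : lam ≠ 0) (G : Matrix ι κ K) (M : Matrix κ κ K) (S : Matrix ι ι K)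
    (hS : lam • (G * M * Gᵀ) = S) (p : ι → K) :
    G *ᵥ ((M * Gᵀ) *ᵥ p) = lam⁻¹ • S *ᵥ p := by
  rw [mulVec_mulVec, ← Matrix.mul_assoc, ← hS, smul_mulVec, smul_smul, inv_mul_cancel₀ hlam,
    one_smul]

theorem generator_lyapunov_decrease_general (n m l : ℕ) (lam : ℝ) (hlam : 0 < lam)
    (f : (Fin n → ℝ) → (Fin n → ℝ))
    (G : (Fin n → ℝ) → Matrix (Fin n) (Fin m) ℝ)
    (B : (Fin n → ℝ) → Matrix (Fin n) (Fin l) ℝ)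
    (Sige : Matrix (Fin l) (Fin l) ℝ)
    (R : Matrix (Fin m) (Fin m) ℝ)
    (Sig : (Fin n → ℝ) → Matrix (Fin n) (Fin n) ℝ)
    (hstruct : ∀ x, lam • (G x * R⁻¹ * (G x)ᵀ) = Sig x)
    (hSig : ∀ x, B x * Sige * (B x)ᵀ = Sig x)
    (hSigPSD : ∀ x, (Sig x).PosSemidef)
    (Ψ : (Fin n → ℝ) → ℝ) (hΨ : ContDiff ℝ 2 Ψ) (hΨpos : ∀ x, 0 < Ψ x)
    (V : (Fin n → ℝ) → ℝ) (hV : ∀ x, V x = -lam * Real.log (Ψ x))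
    (u : (Fin n → ℝ) → (Fin m → ℝ))
    (hu : ∀ x, u x = -((R⁻¹ * (G x)ᵀ).mulVec (grad n V x)))
    (L : (Fin n → ℝ) → ℝ)
    (hL : ∀ x, L x = dotProduct (grad n V x) (f x + (G x).mulVec (u x))
        + (1 / 2) * (hess n V x * (B x * Sige * (B x)ᵀ)).trace)
    (q : (Fin n → ℝ) → ℝ)
    (x : Fin n → ℝ) (hq : 0 ≤ q x)
    (hHJB : (1 / lam) * q x * Ψ x - dotProduct (f x) (grad n Ψ x)
        - (1 / 2) * (hess n Ψ x * Sig x).trace ≤ 0) :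
    L x ≤ -q x - (lam / (2 * (Ψ x) ^ 2)) *
        dotProduct (grad n Ψ x) ((Sig x).mulVec (grad n Ψ x)) ∧
    -q x - (lam / (2 * (Ψ x) ^ 2)) *
        dotProduct (grad n Ψ x) ((Sig x).mulVec (grad n Ψ x)) ≤ 0 := by
  obtain rfl : V = fun y => -lam * log (Ψ y) := funext hV
  have hΨx : Ψ x ≠ 0 := (hΨpos x).ne'
  set A := f x ⬝ᵥ grad n Ψ x + 1 / 2 * (hess n Ψ x * Sig x).trace with hA_def
  have hgradV := grad_const_mul_log (-lam) (hΨ.differentiable (by norm_num) x) hΨx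
  have hLx : L x = -(lam / Ψ x) * A -
      lam / (2 * Ψ x ^ 2) * (grad n Ψ x ⬝ᵥ Sig x *ᵥ grad n Ψ x) := by
    rw [hL, hu, hSig, mulVec_neg,
      mulVec_mul_transpose_mulVec_of_smul_eq hlam.ne' _ _ _ (hstruct x),
      hess_const_mul_log (-lam) hΨ.contDiffAt hΨx, hgradV, sub_mul, smul_mul, smul_mul,
      trace_sub, trace_smul, trace_smul, trace_vecMulVec_mul]
    simp only [dotProduct_add, dotProduct_neg, mulVec_smul, smul_dotProduct, dotProduct_smul,
      smul_eq_mul, dotProduct_comm (grad n Ψ x) (f x), A]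
    field_simp
    ring
  have hA : -(lam / Ψ x) * A ≤ -q x := by
    have hqA : 1 / lam * q x * Ψ x ≤ A := by linarith
    calc -(lam / Ψ x) * A ≤ -(lam / Ψ x) * (1 / lam * q x * Ψ x) :=
          mul_le_mul_of_nonpos_left hqA (neg_nonpos.2 (div_pos hlam (hΨpos x)).le)
      _ = -q x := by field_simp
  have hdissipation : 0 ≤ lam / (2 * Ψ x ^ 2) * (grad n Ψ x ⬝ᵥ Sig x *ᵥ grad n Ψ x) :=
    mul_nonneg (by positivity) ((hSigPSD x).dotProduct_mulVec_nonneg _)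
  exact ⟨by linarith, by linarith⟩

/-- Under the setting of the generator identity, the relaxed HJB inequality
`(1/λ) q Ψ − fᵀ∇Ψ − ½ Tr((∇²Ψ)Σ) ≤ 0` at a point `x` with `q(x) ≥ 0` yields the
Lyapunov decrease condition
`L(V)(x) ≤ −q(x) − (λ/(2Ψ(x)²))(∇Ψ(x))ᵀ Σ(x) ∇Ψ(x) ≤ 0`. -/
theorem generator_lyapunov_decrease (n m l : ℕ) (lam : ℝ) (hlam : 0 < lam)
    (f : (Fin n → ℝ) → (Fin n → ℝ))
    (G : (Fin n → ℝ) → Matrix (Fin n) (Fin m) ℝ)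
    (B : (Fin n → ℝ) → Matrix (Fin n) (Fin l) ℝ)
    (Sige : Matrix (Fin l) (Fin l) ℝ)
    (R : Matrix (Fin m) (Fin m) ℝ) (hR : R.PosDef)
    (Sig : (Fin n → ℝ) → Matrix (Fin n) (Fin n) ℝ)
    (hstruct : ∀ x, lam • (G x * R⁻¹ * (G x)ᵀ) = Sig x)
    (hSig : ∀ x, B x * Sige * (B x)ᵀ = Sig x)
    (hSigPSD : ∀ x, (Sig x).PosSemidef)
    (Ψ : (Fin n → ℝ) → ℝ) (hΨ : ContDiff ℝ 2 Ψ) (hΨpos : ∀ x, 0 < Ψ x)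
    (V : (Fin n → ℝ) → ℝ) (hV : ∀ x, V x = -lam * Real.log (Ψ x))
    (u : (Fin n → ℝ) → (Fin m → ℝ))
    (hu : ∀ x, u x = -((R⁻¹ * (G x)ᵀ).mulVec (grad n V x)))
    (L : (Fin n → ℝ) → ℝ)
    (hL : ∀ x, L x = dotProduct (grad n V x) (f x + (G x).mulVec (u x))
        + (1 / 2) * (hess n V x * (B x * Sige * (B x)ᵀ)).trace)
    (q : (Fin n → ℝ) → ℝ)
    (x : Fin n → ℝ) (hq : 0 ≤ q x)
    (hHJB : (1 / lam) * q x * Ψ x - dotProduct (f x) (grad n Ψ x)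
        - (1 / 2) * (hess n Ψ x * Sig x).trace ≤ 0) :
    L x ≤ -q x - (lam / (2 * (Ψ x) ^ 2)) *
        dotProduct (grad n Ψ x) ((Sig x).mulVec (grad n Ψ x)) ∧
    -q x - (lam / (2 * (Ψ x) ^ 2)) *
        dotProduct (grad n Ψ x) ((Sig x).mulVec (grad n Ψ x)) ≤ 0 :=
  generator_lyapunov_decrease_general n m l lam hlam f G B Sige R Sig hstruct hSig hSigPSD Ψ hΨ
    hΨpos V hV u hu L hL q x hq hHJB
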